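/- arXiv:1306.6199 — 3 statements merged into one kernel-verified Lean document; each statement's English description precedes it below -/
import Mathlib

section
/- Let φ : ℝ → ℝ be continuously differentiable and increasing, and suppose there exist constants c, C, R > 0 such that c|x| ≤ |φ(x)| ≤ C|x| whenever |x| ≥ R. Then the potential ω_{φ'}(z) = ∫_ℝ log*|1 − z/t| φ'(t) dt is a continuous function of z on all of ℂ. -/
open MeasureTheory Complex

/-- The modified logarithm `log*|1 - z/t|`. -/
noncomputable def logStar (z : ℂ) (t : ℝ) : ℝ :=
  if 1 < |t| then Real.log (‖1 - z / (t : ℂ)‖) + z.re / t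
  else Real.log (‖1 - z / (t : ℂ)‖)

/-- The potential `ω_γ(z) = ∫ log*|1 - z/t| γ(t) dt`. -/
noncomputable def pot (γ : ℝ → ℝ) (z : ℂ) : ℝ :=
  ∫ t : ℝ, logStar z t * γ t

/-!
Write `γ = φ'`, a continuous nonnegative function. Near the real axis the only singularity of
`log*|1 - z/t|` is `log |t - z|`. After the substitution `t = s + Re z` it becomes
`log |s - i Im z| ≥ log |s|`, which no longer moves with `z`, so on a compact interval the integral
is continuous by dominated convergence. For `|t| ≥ 2|z|` we have
`log*|1 - z/t| = Re (log (1 - z/t) + z/t) = O(|z|²/t²)`, and `∫_{|t| > T} φ'(t)/t² dt < ∞`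
because `φ'(t)/t² ≤ (φ(t)/t² - 2C/t)'` whenever `φ(t) ≤ Ct`; this dominates the tail.
-/

open Set Filter Topology

lemma measurable_logStar (z : ℂ) : Measurable (logStar z) := by
  unfold logStar
  refine Measurable.ite (measurableSet_lt measurable_const measurable_id.abs) ?_ ?_ <;> fun_prop

lemma continuousAt_logStar {z₀ : ℂ} {t : ℝ} (ht : t ≠ 0) (hz₀ : (t : ℂ) ≠ z₀) :
    ContinuousAt (fun z => logStar z t) z₀ := by
  have hne : ‖1 - z₀ / (t : ℂ)‖ ≠ 0 := by
    rw [norm_ne_zero_iff, sub_ne_zero, ne_eq, eq_div_iff (by exact_mod_cast ht), one_mul]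
    exact hz₀
  unfold logStar
  split_ifs <;> fun_prop (disch := exact hne)

lemma logStar_eq_log_norm_sub (z : ℂ) {t : ℝ} (ht : t ≠ 0) (hz : (t : ℂ) ≠ z) :
    logStar z t = Real.log ‖(t : ℂ) - z‖ - Real.log |t| + z.re * (if 1 < |t| then t⁻¹ else 0) := by
  have hdiv : 1 - z / (t : ℂ) = ((t : ℂ) - z) / t := by
    rw [sub_div, div_self (ofReal_ne_zero.2 ht)]
  have hlog : Real.log ‖1 - z / (t : ℂ)‖ = Real.log ‖(t : ℂ) - z‖ - Real.log |t| := by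
    rw [hdiv, norm_div, norm_real, Real.norm_eq_abs,
      Real.log_div (norm_ne_zero_iff.2 (sub_ne_zero.2 hz)) (abs_ne_zero.2 ht)]
  unfold logStar
  split_ifs
  · rw [hlog, div_eq_mul_inv]
  · rw [hlog, mul_zero, add_zero]

lemma abs_logStar_le {z : ℂ} {t : ℝ} (ht : 1 < |t|) (hz : 2 * ‖z‖ ≤ |t|) :
    |logStar z t| ≤ ‖z‖ ^ 2 / t ^ 2 := by
  set w := z / (t : ℂ)
  have hw : ‖w‖ = ‖z‖ / |t| := by rw [norm_div, norm_real, Real.norm_eq_abs]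
  have hw_half : ‖w‖ ≤ 1 / 2 := by
    rw [hw, div_le_iff₀ (by positivity)]; linarith
  -- `logStar z t` is the real part of `log (1 - w) + w`, whose Taylor expansion starts at `w²`.
  have hre : logStar z t = (log (1 + -w) - -w).re := by
    rw [logStar, if_pos ht, sub_neg_eq_add, add_re, log_re, div_ofReal_re, ← sub_eq_add_neg]
  have htaylor := norm_log_one_add_sub_self_le (z := -w) (by rw [norm_neg]; linarith)
  rw [norm_neg] at htaylor
  have hinv : (1 - ‖w‖)⁻¹ ≤ 2 := by
    rw [inv_le_comm₀ (by linarith) two_pos]; linarith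
  calc |logStar z t| ≤ ‖log (1 + -w) - -w‖ := hre ▸ abs_re_le_norm _
    _ ≤ ‖w‖ ^ 2 * (1 - ‖w‖)⁻¹ / 2 := htaylor
    _ ≤ ‖w‖ ^ 2 := by nlinarith [sq_nonneg ‖w‖]
    _ = ‖z‖ ^ 2 / t ^ 2 := by rw [hw, div_pow, sq_abs]

lemma abs_le_norm_sub_mul_I (s y : ℝ) : |s| ≤ ‖(s : ℂ) - y * I‖ := by
  simpa using abs_re_le_norm ((s : ℂ) - y * I)

lemma abs_log_norm_sub_mul_I_le {s y L : ℝ} (hs : s ≠ 0) (hL : |s| + |y| ≤ L) :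
    |Real.log ‖(s : ℂ) - y * I‖| ≤ |Real.log s| + |Real.log L| := by
  have hlow := abs_le_norm_sub_mul_I s y
  have hup : ‖(s : ℂ) - y * I‖ ≤ L :=
    (by simpa using norm_sub_le (s : ℂ) (y * I) : ‖(s : ℂ) - y * I‖ ≤ |s| + |y|).trans hL
  have h₁ := Real.log_le_log (abs_pos.2 hs) hlow
  have h₂ := Real.log_le_log ((abs_pos.2 hs).trans_le hlow) hup
  rw [Real.log_abs] at h₁
  rw [abs_le]
  constructor <;> linarith [neg_abs_le (Real.log s), le_abs_self (Real.log L),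
    abs_nonneg (Real.log s), abs_nonneg (Real.log L)]

lemma notMem_frontier_Icc {a b x : ℝ} (ha : x ≠ a) (hb : x ≠ b) : x ∉ frontier (Icc a b) := by
  rw [frontier, isClosed_Icc.closure_eq, interior_Icc]
  rintro ⟨⟨h₁, h₂⟩, h₃⟩
  exact h₃ ⟨h₁.lt_of_ne' ha, h₂.lt_of_ne hb⟩

lemma norm_log_norm_sub_mul_I_mul_indicator_le {γ : ℝ → ℝ} {a b M L s : ℝ} {z : ℂ}
    (hM : ∀ x ∈ Icc a b, ‖γ x‖ ≤ M) (hM₀ : 0 ≤ M) (hs : s ≠ 0)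
    (hL : |a| + |b| + 2 * ‖z‖ ≤ L) :
    ‖Real.log ‖(s : ℂ) - z.im * I‖ * (Icc a b).indicator γ (s + z.re)‖ ≤
      (Icc (-L) L).indicator (fun s => (|Real.log s| + |Real.log L|) * M) s := by
  by_cases hsab : s + z.re ∈ Icc a b
  · have hsx : |s + z.re| ≤ |a| + |b| := (abs_le_max_abs_abs hsab.1 hsab.2).trans
      (max_le_add_of_nonneg (abs_nonneg _) (abs_nonneg _))
    have hs_le : |s| ≤ |s + z.re| + |z.re| := by simpa using abs_sub (s + z.re) z.re
    have hsyL : |s| + |z.im| ≤ L := by linarith [abs_re_le_norm z, abs_im_le_norm z]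
    rw [indicator_of_mem (show s ∈ Icc (-L) L from abs_le.1 (by linarith [abs_nonneg z.im])),
      indicator_of_mem hsab, norm_mul, Real.norm_eq_abs]
    exact mul_le_mul (abs_log_norm_sub_mul_I_le hs hsyL) (hM _ hsab) (norm_nonneg _)
      (by positivity)
  · rw [indicator_of_notMem hsab, mul_zero, norm_zero]
    exact indicator_nonneg (fun _ _ => by positivity) _

lemma setIntegral_Icc_log_norm_sub_mul_eq (γ : ℝ → ℝ) (a b : ℝ) (z : ℂ) :
    ∫ t in Icc a b, Real.log ‖(t : ℂ) - z‖ * γ t =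
      ∫ s : ℝ, Real.log ‖(s : ℂ) - z.im * I‖ * (Icc a b).indicator γ (s + z.re) := by
  rw [← integral_indicator measurableSet_Icc, ← integral_add_right_eq_self _ z.re]
  refine integral_congr_ae (Eventually.of_forall fun s => ?_)
  dsimp only
  rw [indicator_mul_right]
  congr 3
  apply Complex.ext <;> simp

lemma continuous_setIntegral_Icc_log_norm_sub_mul {γ : ℝ → ℝ} {a b : ℝ}
    (hγ : ContinuousOn γ (Icc a b)) :
    Continuous fun z : ℂ => ∫ t in Icc a b, Real.log ‖(t : ℂ) - z‖ * γ t := by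
  simp_rw [setIntegral_Icc_log_norm_sub_mul_eq γ a b]
  refine continuous_iff_continuousAt.2 fun z₀ => ?_
  obtain ⟨M, hM⟩ := isCompact_Icc.exists_bound_of_continuousOn hγ
  have hM' : ∀ x ∈ Icc a b, ‖γ x‖ ≤ max M 0 := fun x hx => (hM x hx).trans (le_max_left _ _)
  set L := |a| + |b| + 2 * (‖z₀‖ + 1)
  have hγm : Measurable ((Icc a b).indicator γ) := by
    classical
    rw [← piecewise_eq_indicator]
    exact hγ.measurable_piecewise continuousOn_const measurableSet_Icc
  refine continuousAt_of_dominated (bound := (Icc (-L) L).indicator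
    fun s => (|Real.log s| + |Real.log L|) * max M 0) ?_ ?_ ?_ ?_
  · exact Eventually.of_forall fun z =>
      ((by fun_prop : Measurable fun s : ℝ => Real.log ‖(s : ℂ) - z.im * I‖).mul
        (hγm.comp (measurable_add_const z.re))).aestronglyMeasurable
  · filter_upwards [Metric.ball_mem_nhds z₀ one_pos] with z hz
    filter_upwards [(countable_singleton (0 : ℝ)).ae_notMem volume] with s hs
    exact norm_log_norm_sub_mul_I_mul_indicator_le hM' (le_max_right _ _) (by simpa using hs)
      (by linarith [norm_lt_of_mem_ball hz])
  · rw [integrable_indicator_iff measurableSet_Icc, ← intervalIntegrable_iff_integrableOn_Icc_of_le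
      (by linarith [norm_nonneg z₀, abs_nonneg a, abs_nonneg b])]
    exact (intervalIntegral.intervalIntegrable_log'.norm.add intervalIntegrable_const).mul_const _
  · filter_upwards [((toFinite {0, a - z₀.re, b - z₀.re}).countable).ae_notMem volume] with s hs
    simp only [mem_insert_iff, mem_singleton_iff, not_or] at hs
    obtain ⟨hs0, hsa, hsb⟩ := hs
    have hfr : s + z₀.re ∉ frontier (Icc a b) :=
      notMem_frontier_Icc (by contrapose! hsa; linarith) (by contrapose! hsb; linarith)
    have hnorm : ‖(s : ℂ) - z₀.im * I‖ ≠ 0 :=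
      ((abs_pos.2 hs0).trans_le (abs_le_norm_sub_mul_I s z₀.im)).ne'
    exact ((by fun_prop : ContinuousAt (fun z : ℂ => ‖(s : ℂ) - z.im * I‖) z₀).log hnorm).mul
      (((hγ.mono interior_subset).continuousAt_indicator hfr).comp (f := fun z : ℂ => s + z.re)
        (by fun_prop))

lemma integrableOn_Icc_log_norm_sub_mul {γ : ℝ → ℝ} {a b : ℝ} (hγ : ContinuousOn γ (Icc a b))
    (z : ℂ) : IntegrableOn (fun t : ℝ => Real.log ‖(t : ℂ) - z‖ * γ t) (Icc a b) := by
  rcases le_or_gt a b with hab | hab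
  · have hlog : IntervalIntegrable (fun t : ℝ => Real.log ‖(t : ℂ) - z‖) volume a b :=
      MeromorphicOn.intervalIntegrable_log_norm fun t _ =>
        ((ofRealCLM.analyticAt t).sub analyticAt_const).meromorphicAt
    rw [← intervalIntegrable_iff_integrableOn_Icc_of_le hab]
    exact hlog.mul_continuousOn (by rwa [uIcc_of_le hab])
  · simp [Icc_eq_empty_of_lt hab]

lemma integrableOn_Icc_log_abs_mul {γ : ℝ → ℝ} {a b : ℝ} (hγ : ContinuousOn γ (Icc a b)) :
    IntegrableOn (fun t => Real.log |t| * γ t) (Icc a b) := by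
  simpa using integrableOn_Icc_log_norm_sub_mul hγ 0

lemma ae_logStar_mul_eq (γ : ℝ → ℝ) (z : ℂ) : ∀ᵐ t : ℝ, logStar z t * γ t =
    Real.log ‖(t : ℂ) - z‖ * γ t - Real.log |t| * γ t +
      z.re * ((if 1 < |t| then t⁻¹ else 0) * γ t) := by
  filter_upwards [((toFinite {0, z.re}).countable).ae_notMem volume] with t ht
  simp only [mem_insert_iff, mem_singleton_iff, not_or] at ht
  have hz : (t : ℂ) ≠ z := fun h => ht.2 (by rw [← h, ofReal_re])
  rw [logStar_eq_log_norm_sub z ht.1 hz]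
  ring

lemma integrableOn_Icc_ite_inv_mul {γ : ℝ → ℝ} {a b : ℝ} (hγ : ContinuousOn γ (Icc a b)) :
    IntegrableOn (fun t => (if 1 < |t| then t⁻¹ else 0) * γ t) (Icc a b) := by
  refine (hγ.integrableOn_Icc).bdd_mul (c := 1) ?_ (Eventually.of_forall fun t => ?_)
  · exact (Measurable.ite (measurableSet_lt measurable_const measurable_id.abs) measurable_inv
      measurable_const).aestronglyMeasurable
  · split_ifs with h
    · rw [norm_inv, Real.norm_eq_abs]; exact inv_le_one_of_one_le₀ h.le
    · simp

lemma integrableOn_Icc_logStar_mul {γ : ℝ → ℝ} {a b : ℝ} (hγ : ContinuousOn γ (Icc a b))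
    (z : ℂ) : IntegrableOn (fun t => logStar z t * γ t) (Icc a b) :=
  (((integrableOn_Icc_log_norm_sub_mul hγ z).sub (integrableOn_Icc_log_abs_mul hγ)).add
    ((integrableOn_Icc_ite_inv_mul hγ).const_mul z.re)).congr_fun_ae
    (EventuallyEq.symm (ae_restrict_of_ae (ae_logStar_mul_eq γ z)))

lemma continuous_setIntegral_Icc_logStar_mul {γ : ℝ → ℝ} {a b : ℝ}
    (hγ : ContinuousOn γ (Icc a b)) :
    Continuous fun z => ∫ t in Icc a b, logStar z t * γ t := by
  have key : ∀ z, ∫ t in Icc a b, logStar z t * γ t =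
      (∫ t in Icc a b, Real.log ‖(t : ℂ) - z‖ * γ t) -
        (∫ t in Icc a b, Real.log |t| * γ t) +
        z.re * ∫ t in Icc a b, (if 1 < |t| then t⁻¹ else 0) * γ t := fun z => by
    have h₁ := integrableOn_Icc_log_norm_sub_mul hγ z
    have h₂ := integrableOn_Icc_log_abs_mul hγ
    rw [integral_congr_ae (ae_restrict_of_ae (ae_logStar_mul_eq γ z)),
      integral_add (f := fun t : ℝ => Real.log ‖(t : ℂ) - z‖ * γ t - Real.log |t| * γ t)
        (h₁.sub h₂) ((integrableOn_Icc_ite_inv_mul hγ).const_mul z.re),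
      integral_sub h₁ h₂, integral_const_mul]
  simp_rw [key]
  exact ((continuous_setIntegral_Icc_log_norm_sub_mul hγ).sub continuous_const).add
    (continuous_re.mul continuous_const)

lemma lt_abs_of_notMem_Icc {T t : ℝ} (ht : t ∉ Icc (-T) T) : T < |t| := by
  rwa [mem_Icc, ← abs_le, not_le] at ht

lemma norm_logStar_mul_le_of_notMem_Icc {z : ℂ} {T t : ℝ} (hT : 1 ≤ T) (hz : 2 * ‖z‖ ≤ T)
    (ht : t ∉ Icc (-T) T) (x : ℝ) : ‖logStar z t * x‖ ≤ ‖z‖ ^ 2 * ‖x / t ^ 2‖ := by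
  have hTt := lt_abs_of_notMem_Icc ht
  calc ‖logStar z t * x‖ = |logStar z t| * |x| := by
        rw [norm_mul, Real.norm_eq_abs, Real.norm_eq_abs]
    _ ≤ ‖z‖ ^ 2 / t ^ 2 * |x| := by
        gcongr; exact abs_logStar_le (by linarith) (by linarith)
    _ = ‖z‖ ^ 2 * ‖x / t ^ 2‖ := by
        rw [Real.norm_eq_abs, abs_div, abs_of_nonneg (sq_nonneg t)]; ring

lemma integrableOn_compl_Icc_logStar_mul {γ : ℝ → ℝ} (hγm : Measurable γ) {T : ℝ} (hT : 1 ≤ T)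
    (hγ : IntegrableOn (fun t => γ t / t ^ 2) (Icc (-T) T)ᶜ) {z : ℂ} (hz : 2 * ‖z‖ ≤ T) :
    IntegrableOn (fun t => logStar z t * γ t) (Icc (-T) T)ᶜ :=
  (hγ.norm.const_mul (‖z‖ ^ 2)).mono' ((measurable_logStar z).mul hγm).aestronglyMeasurable
    ((ae_restrict_iff' measurableSet_Icc.compl).2 (Eventually.of_forall fun _ ht =>
      norm_logStar_mul_le_of_notMem_Icc hT hz ht _))

lemma continuousAt_setIntegral_compl_Icc_logStar_mul {γ : ℝ → ℝ} (hγm : Measurable γ) {T : ℝ}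
    (hγ : IntegrableOn (fun t => γ t / t ^ 2) (Icc (-T) T)ᶜ) {z₀ : ℂ}
    (hT : 2 * (‖z₀‖ + 1) ≤ T) :
    ContinuousAt (fun z => ∫ t in (Icc (-T) T)ᶜ, logStar z t * γ t) z₀ := by
  have hT1 : 1 ≤ T := by linarith [norm_nonneg z₀]
  refine continuousAt_of_dominated (bound := fun t => (‖z₀‖ + 1) ^ 2 * ‖γ t / t ^ 2‖)
    (Eventually.of_forall fun z => ((measurable_logStar z).mul hγm).aestronglyMeasurable)
    ?_ (hγ.norm.const_mul _) ?_
  · filter_upwards [Metric.ball_mem_nhds z₀ one_pos] with z hz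
    have hz : ‖z‖ ≤ ‖z₀‖ + 1 := (norm_lt_of_mem_ball hz).le
    refine (ae_restrict_iff' measurableSet_Icc.compl).2 (Eventually.of_forall fun t ht => ?_)
    refine (norm_logStar_mul_le_of_notMem_Icc hT1 (by linarith) ht _).trans ?_
    gcongr
  · refine (ae_restrict_iff' measurableSet_Icc.compl).2 (Eventually.of_forall fun t ht => ?_)
    have hTt := lt_abs_of_notMem_Icc ht
    have ht0 : t ≠ 0 := by rintro rfl; rw [abs_zero] at hTt; linarith
    have hz₀ : (t : ℂ) ≠ z₀ := by
      rintro rfl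
      rw [norm_real, Real.norm_eq_abs] at hT
      linarith
    exact (continuousAt_logStar ht0 hz₀).mul continuousAt_const

lemma integrableOn_Ioi_deriv_div_sq {φ : ℝ → ℝ} (hd : Differentiable ℝ φ) (hmono : Monotone φ)
    {C T : ℝ} (hT : 0 < T) (hφ : ∀ t, T ≤ t → |φ t| ≤ C * t) :
    IntegrableOn (fun t => deriv φ t / t ^ 2) (Ioi T) := by
  set g' := fun t => deriv φ t / t ^ 2 - 2 * φ t / t ^ 3 + 2 * C / t ^ 2
  have hderiv : ∀ t ∈ Ici T, HasDerivAt (fun t => φ t / t ^ 2 - 2 * C / t) (g' t) t := by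
    intro t ht
    have ht0 : t ≠ 0 := (hT.trans_le ht).ne'
    refine (((hd t).hasDerivAt.div (hasDerivAt_pow 2 t) (pow_ne_zero 2 ht0)).sub
      ((hasDerivAt_const t (2 * C)).div (hasDerivAt_id' t) ht0)).congr_deriv ?_
    simp only [g']; field_simp; ring
  have hlim : Tendsto (fun t => φ t / t ^ 2 - 2 * C / t) atTop (𝓝 0) := by
    have hCt : Tendsto (fun t : ℝ => C / t) atTop (𝓝 0) := tendsto_const_nhds.div_atTop tendsto_id
    have hφt : Tendsto (fun t => φ t / t ^ 2) atTop (𝓝 0) := by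
      refine squeeze_zero_norm' ?_ hCt
      filter_upwards [eventually_ge_atTop T] with t ht
      have ht0 : 0 < t := hT.trans_le ht
      rw [norm_div, norm_pow, Real.norm_eq_abs, Real.norm_eq_abs, abs_of_pos ht0,
        div_le_div_iff₀ (by positivity) ht0]
      nlinarith [hφ t ht]
    simpa [mul_div_assoc] using hφt.sub (hCt.const_mul 2)
  have hle : ∀ t ∈ Ioi T, deriv φ t / t ^ 2 ≤ g' t := by
    intro t ht
    have ht0 : 0 < t := hT.trans ht
    have : 2 * φ t / t ^ 3 ≤ 2 * C / t ^ 2 := by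
      rw [div_le_div_iff₀ (by positivity) (by positivity)]
      nlinarith [le_abs_self (φ t), hφ t ht.le, sq_nonneg t]
    simp only [g']; linarith
  have hpos : ∀ t, 0 ≤ deriv φ t / t ^ 2 := fun t => div_nonneg hmono.deriv_nonneg (sq_nonneg t)
  refine (integrableOn_Ioi_deriv_of_nonneg' hderiv (fun t ht => (hpos t).trans (hle t ht))
    hlim).mono' ((measurable_deriv φ).div (measurable_id.pow_const 2)).aestronglyMeasurable ?_
  refine (ae_restrict_iff' measurableSet_Ioi).2 (Eventually.of_forall fun t ht => ?_)
  rw [Real.norm_eq_abs, abs_of_nonneg (hpos t)]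
  exact hle t ht

lemma integrableOn_compl_Icc_deriv_div_sq {φ : ℝ → ℝ} (hd : Differentiable ℝ φ)
    (hmono : Monotone φ) {C T : ℝ} (hT : 0 < T) (hφ : ∀ t, T ≤ |t| → |φ t| ≤ C * |t|) :
    IntegrableOn (fun t => deriv φ t / t ^ 2) (Icc (-T) T)ᶜ := by
  have hpos := integrableOn_Ioi_deriv_div_sq hd hmono hT fun t ht => by
    simpa [abs_of_pos (hT.trans_le ht)] using hφ t (ht.trans (le_abs_self t))
  -- the left tail is the right tail of the reflection `t ↦ -φ (-t)`
  have hneg := integrableOn_Ioi_deriv_div_sq (φ := fun t => -φ (-t)) (by fun_prop)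
    (fun x y h => neg_le_neg (hmono (neg_le_neg h))) hT fun t ht => by
      simpa [abs_of_pos (hT.trans_le ht)] using
        hφ (-t) (by rw [abs_neg]; exact ht.trans (le_abs_self t))
  have hcompl : (Icc (-T) T)ᶜ ⊆ Iio (-T) ∪ Ioi T := fun t ht => by
    simpa [or_iff_not_imp_left] using ht
  refine (IntegrableOn.union ?_ hpos).mono_set hcompl
  rw [← (Measure.measurePreserving_neg volume).integrableOn_comp_preimage
    (Homeomorph.neg ℝ).measurableEmbedding]
  simpa [Function.comp_def, deriv_comp_neg] using hneg

theorem stmt_1_general (φ : ℝ → ℝ) (hφ : ContDiff ℝ 1 φ) (hmono : StrictMono φ)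
    (c C R : ℝ)
    (hbound : ∀ x : ℝ, R ≤ |x| → c * |x| ≤ |φ x| ∧ |φ x| ≤ C * |x|) :
    Continuous (pot (deriv φ)) := by
  refine continuous_iff_continuousAt.2 fun z₀ => ?_
  set T := max R (2 * (‖z₀‖ + 1))
  have hT : 2 * (‖z₀‖ + 1) ≤ T := le_max_right _ _
  have hT1 : 1 ≤ T := by linarith [norm_nonneg z₀]
  have hγ : Continuous (deriv φ) := hφ.continuous_deriv le_rfl
  have htail : IntegrableOn (fun t => deriv φ t / t ^ 2) (Icc (-T) T)ᶜ :=
    integrableOn_compl_Icc_deriv_div_sq (hφ.differentiable one_ne_zero) hmono.monotone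
      (by linarith) fun t ht => (hbound t ((le_max_left _ _).trans ht)).2
  have hsplit : (fun z => (∫ t in Icc (-T) T, logStar z t * deriv φ t) +
      ∫ t in (Icc (-T) T)ᶜ, logStar z t * deriv φ t) =ᶠ[𝓝 z₀] pot (deriv φ) := by
    filter_upwards [Metric.ball_mem_nhds z₀ one_pos] with z hz
    have hz : 2 * ‖z‖ ≤ T := by linarith [norm_lt_of_mem_ball hz]
    refine integral_add_compl measurableSet_Icc ?_
    rw [← integrableOn_univ, ← union_compl_self (Icc (-T) T)]
    exact (integrableOn_Icc_logStar_mul hγ.continuousOn z).union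
      (integrableOn_compl_Icc_logStar_mul (measurable_deriv φ) hT1 htail hz)
  exact ((continuous_setIntegral_Icc_logStar_mul hγ.continuousOn).continuousAt.add
    (continuousAt_setIntegral_compl_Icc_logStar_mul (measurable_deriv φ) htail hT)).congr hsplit

theorem stmt_1 (φ : ℝ → ℝ) (hφ : ContDiff ℝ 1 φ) (hmono : StrictMono φ)
    (c C R : ℝ) (hc : 0 < c) (hC : 0 < C) (hR : 0 < R)
    (hbound : ∀ x : ℝ, R ≤ |x| → c * |x| ≤ |φ x| ∧ |φ x| ≤ C * |x|) :
    Continuous (pot (deriv φ)) :=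
  stmt_1_general φ hφ hmono c C R hbound
end

section
/- Let γ : ℝ → ℝ be positive and continuous and let φ(x) = ∫₀^x γ(t) dt be bi-Lipschitz for distances larger than N with constants C₁, C₂ > 0. Then (ω_γ(i(y+1)) − ω_γ(iy))/y → 0 as y → ∞. -/
open MeasureTheory intervalIntegral Filter

/-!
On the imaginary axis `log*|1 - iy/t| = ½ log (1 + y²/t²)`, so by `log x ≤ x - 1`,
`ω_γ(i(y+1)) - ω_γ(iy) = ½ ∫ log ((t² + (y+1)²) / (t² + y²)) γ(t) dt`
`≤ (y + ½) ∫ γ(t) / (t² + y²) dt`. The upper Lipschitz bound on `φ` bounds the mass of `γ` on every unit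
interval, which makes `γ(t) / (1 + t²)` integrable; dominated convergence then gives
`∫ γ(t) / (t² + y²) dt → 0`.
-/

theorem intervalIntegral_add_one_le_mul_max {f : ℝ → ℝ} (hf : LocallyIntegrable f)
    (hf0 : ∀ t, 0 ≤ f t) {N C : ℝ}
    (h : ∀ x₁ x₂, N ≤ x₂ - x₁ → ∫ t in x₁..x₂, f t ≤ C * (x₂ - x₁)) (a : ℝ) :
    ∫ t in a..a + 1, f t ≤ C * max 1 N := by
  have hL : 1 ≤ max 1 N := le_max_left 1 N
  calc ∫ t in a..a + 1, f t ≤ ∫ t in a..a + max 1 N, f t :=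
        integral_mono_interval le_rfl (by linarith) (by linarith) (ae_of_all _ hf0)
          ((hf.integrableOn_isCompact isCompact_uIcc).intervalIntegrable)
    _ ≤ C * max 1 N := by simpa using h a (a + max 1 N) (by simp)

theorem one_add_sq_inv_le_of_mem_Ioc {k t : ℝ} (ht : t ∈ Set.Ioc k (k + 1)) :
    (1 + t ^ 2)⁻¹ ≤ 3 * (1 + k ^ 2)⁻¹ := by
  obtain ⟨hkt, htk⟩ := ht
  rw [← div_eq_mul_inv, inv_eq_one_div, div_le_div_iff₀ (by positivity) (by positivity)]
  nlinarith [sq_nonneg (k - 2 * t), mul_nonneg (sub_nonneg.2 hkt.le) (sub_nonneg.2 htk)]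

theorem summable_int_one_add_sq_inv : Summable fun k : ℤ => (1 + (k : ℝ) ^ 2)⁻¹ := by
  refine (Real.summable_one_div_int_pow.2 one_lt_two).of_norm_bounded_eventually ?_
  filter_upwards [Set.Finite.compl_mem_cofinite (Set.finite_singleton (0 : ℤ))] with k hk
  have hk : (k : ℝ) ≠ 0 := by simpa using hk
  rw [Real.norm_of_nonneg (by positivity), one_div]
  exact inv_anti₀ (by positivity) (by linarith)

theorem integrable_div_one_add_sq_of_intervalIntegral_le {f : ℝ → ℝ} (hf : LocallyIntegrable f)
    (hf0 : ∀ t, 0 ≤ f t) {M : ℝ} (hM : ∀ a, ∫ t in a..a + 1, f t ≤ M) :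
    Integrable fun t => f t / (1 + t ^ 2) := by
  have hblock (k : ℤ) : ∫⁻ t in Set.Ioc (k : ℝ) (k + 1), ENNReal.ofReal (f t / (1 + t ^ 2))
      ≤ ENNReal.ofReal (3 * (1 + (k : ℝ) ^ 2)⁻¹) * ENNReal.ofReal M := by
    have hfi : IntegrableOn f (Set.Ioc (k : ℝ) (k + 1)) :=
      (hf.integrableOn_isCompact isCompact_Icc).mono_set Set.Ioc_subset_Icc_self
    calc ∫⁻ t in Set.Ioc (k : ℝ) (k + 1), ENNReal.ofReal (f t / (1 + t ^ 2))
        ≤ ∫⁻ t in Set.Ioc (k : ℝ) (k + 1),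
            ENNReal.ofReal (3 * (1 + (k : ℝ) ^ 2)⁻¹) * ENNReal.ofReal (f t) := by
          refine setLIntegral_mono' measurableSet_Ioc fun t ht => ?_
          rw [← ENNReal.ofReal_mul (by positivity), div_eq_inv_mul]
          exact ENNReal.ofReal_le_ofReal
            (mul_le_mul_of_nonneg_right (one_add_sq_inv_le_of_mem_Ioc ht) (hf0 t))
      _ = ENNReal.ofReal (3 * (1 + (k : ℝ) ^ 2)⁻¹) * ENNReal.ofReal (∫ t in k..k + 1, f t) := by
          rw [lintegral_const_mul' _ _ ENNReal.ofReal_ne_top, integral_of_le (by linarith),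
            ofReal_integral_eq_lintegral_ofReal hfi (ae_of_all _ hf0)]
      _ ≤ ENNReal.ofReal (3 * (1 + (k : ℝ) ^ 2)⁻¹) * ENNReal.ofReal M := by
          gcongr
          exact hM k
  have hlt : ∫⁻ t, ENNReal.ofReal (f t / (1 + t ^ 2)) < ⊤ := by
    calc ∫⁻ t, ENNReal.ofReal (f t / (1 + t ^ 2))
        = ∫⁻ t in ⋃ k : ℤ, Set.Ioc (k : ℝ) (k + 1), ENNReal.ofReal (f t / (1 + t ^ 2)) := by
          rw [iUnion_Ioc_intCast, setLIntegral_univ]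
      _ ≤ ∑' k : ℤ, ENNReal.ofReal (3 * (1 + (k : ℝ) ^ 2)⁻¹) * ENNReal.ofReal M :=
          (lintegral_iUnion_le _ _).trans (ENNReal.tsum_le_tsum hblock)
      _ = ENNReal.ofReal (∑' k : ℤ, 3 * (1 + (k : ℝ) ^ 2)⁻¹) * ENNReal.ofReal M := by
          rw [ENNReal.tsum_mul_right, ENNReal.ofReal_tsum_of_nonneg (fun k => by positivity)
            (summable_int_one_add_sq_inv.mul_left 3)]
      _ < ⊤ := by finiteness
  have hmeas : AEStronglyMeasurable fun t => f t / (1 + t ^ 2) :=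
    (hf.aestronglyMeasurable.aemeasurable.div (by fun_prop)).aestronglyMeasurable
  exact ⟨hmeas, (hasFiniteIntegral_iff_ofReal (ae_of_all _ fun t => by
    have := hf0 t; positivity)).2 hlt⟩

theorem norm_div_sq_add_sq_le (x t : ℝ) {y : ℝ} (hy : 1 ≤ y) :
    ‖x / (t ^ 2 + y ^ 2)‖ ≤ ‖x / (1 + t ^ 2)‖ := by
  rw [norm_div, norm_div, Real.norm_of_nonneg (by positivity : (0 : ℝ) ≤ t ^ 2 + y ^ 2),
    Real.norm_of_nonneg (by positivity : (0 : ℝ) ≤ 1 + t ^ 2)]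
  exact div_le_div_of_nonneg_left (norm_nonneg x) (by positivity) (by nlinarith)

theorem integrable_div_sq_add_sq {f : ℝ → ℝ} (hf : Integrable fun t => f t / (1 + t ^ 2))
    {y : ℝ} (hy : 1 ≤ y) : Integrable fun t => f t / (t ^ 2 + y ^ 2) := by
  have hfm : AEMeasurable f :=
    (hf.aemeasurable.mul (by fun_prop : Measurable fun t : ℝ => 1 + t ^ 2).aemeasurable).congr
      (ae_of_all _ fun t => div_mul_cancel₀ _ (by positivity))
  exact hf.norm.mono' (hfm.div (by fun_prop)).aestronglyMeasurable
    (ae_of_all _ fun t => norm_div_sq_add_sq_le (f t) t hy)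

theorem tendsto_integral_div_sq_add_sq {f : ℝ → ℝ} (hf : Integrable fun t => f t / (1 + t ^ 2)) :
    Tendsto (fun y => ∫ t, f t / (t ^ 2 + y ^ 2)) atTop (nhds 0) := by
  have hlim (t : ℝ) : Tendsto (fun y : ℝ => f t / (t ^ 2 + y ^ 2)) atTop (nhds 0) :=
    tendsto_const_nhds.div_atTop
      (tendsto_atTop_add_const_left _ _ (tendsto_pow_atTop two_ne_zero))
  simpa using tendsto_integral_filter_of_dominated_convergence _
    ((eventually_ge_atTop 1).mono fun y hy => (integrable_div_sq_add_sq hf hy).aestronglyMeasurable)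
    ((eventually_ge_atTop 1).mono fun y hy => ae_of_all _ fun t => norm_div_sq_add_sq_le (f t) t hy)
    hf.norm (ae_of_all _ hlim)

open Complex

theorem logStar_I_mul (y t : ℝ) :
    logStar (I * y) t = Real.log (1 + (y / t) ^ 2) / 2 := by
  have hnorm : ‖1 - I * y / t‖ = √(1 + (y / t) ^ 2) := by
    rw [show (1 : ℂ) - I * y / t = (1 : ℝ) + (-(y / t) : ℝ) * I by push_cast; ring,
      norm_add_mul_I, one_pow, neg_sq]
  simp [logStar, hnorm, Real.log_sqrt (by positivity : (0 : ℝ) ≤ 1 + (y / t) ^ 2)]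

theorem logStar_I_mul_nonneg (y t : ℝ) : 0 ≤ logStar (I * y) t := by
  rw [logStar_I_mul]
  have := Real.log_nonneg (le_add_of_nonneg_right (sq_nonneg (y / t)))
  positivity

theorem logStar_I_mul_mono {y y' : ℝ} (hy : 0 ≤ y) (hyy' : y ≤ y') (t : ℝ) :
    logStar (I * y) t ≤ logStar (I * y') t := by
  rw [logStar_I_mul, logStar_I_mul, div_pow, div_pow]
  gcongr

theorem logStar_I_mul_le_of_abs_le_one (y : ℝ) {t : ℝ} (ht : |t| ≤ 1) :
    logStar (I * y) t ≤ Real.log (1 + y ^ 2) / 2 - Real.log t := by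
  rw [logStar_I_mul]
  rcases eq_or_ne t 0 with rfl | ht0
  · have := Real.log_nonneg (le_add_of_nonneg_right (sq_nonneg y))
    simp only [div_zero, ne_eq, OfNat.ofNat_ne_zero, not_false_eq_true, zero_pow, add_zero,
      Real.log_one, zero_div, Real.log_zero, sub_zero]
    positivity
  have ht2 : t ^ 2 ≤ 1 := by rw [← sq_abs]; exact pow_le_one₀ (abs_nonneg t) ht
  have hle : 1 + (y / t) ^ 2 ≤ (1 + y ^ 2) / t ^ 2 := by
    rw [div_pow, add_div]
    linarith [one_le_one_div (by positivity : 0 < t ^ 2) ht2]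
  have := Real.log_le_log (by positivity) hle
  rw [Real.log_div (by positivity) (by positivity), Real.log_pow] at this
  push_cast at this
  linarith

theorem logStar_I_mul_le_of_one_le_abs (y : ℝ) {t : ℝ} (ht : 1 ≤ |t|) :
    logStar (I * y) t ≤ y ^ 2 / (1 + t ^ 2) := by
  rw [logStar_I_mul]
  have ht2 : 1 ≤ t ^ 2 := by rw [← sq_abs]; exact one_le_pow₀ ht
  have := Real.log_le_sub_one_of_pos (by positivity : 0 < 1 + (y / t) ^ 2)
  have hle : (y / t) ^ 2 / 2 ≤ y ^ 2 / (1 + t ^ 2) := by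
    rw [div_pow, div_div]
    exact div_le_div_of_nonneg_left (sq_nonneg y) (by positivity) (by linarith)
  linarith

theorem logStar_I_mul_add_one_sub_le {y : ℝ} (hy : 0 ≤ y) (t : ℝ) :
    logStar (I * ↑(y + 1)) t - logStar (I * y) t ≤ (2 * y + 1) / 2 / (t ^ 2 + y ^ 2) := by
  rw [logStar_I_mul, logStar_I_mul]
  rcases eq_or_ne t 0 with rfl | ht0
  · simp only [div_zero, ne_eq, OfNat.ofNat_ne_zero, not_false_eq_true, zero_pow, add_zero,
      Real.log_one, zero_div, sub_self, zero_add]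
    positivity
  have hratio : (1 + ((y + 1) / t) ^ 2) / (1 + (y / t) ^ 2)
      = 1 + (2 * y + 1) / (t ^ 2 + y ^ 2) := by
    field_simp
    ring
  have := Real.log_le_sub_one_of_pos
    (by positivity : 0 < (1 + ((y + 1) / t) ^ 2) / (1 + (y / t) ^ 2))
  rw [Real.log_div (by positivity) (by positivity), hratio] at this
  have : (2 * y + 1) / 2 / (t ^ 2 + y ^ 2) = (2 * y + 1) / (t ^ 2 + y ^ 2) / 2 := by ring
  linarith

theorem integrable_logStar_I_mul_mul {f : ℝ → ℝ} (hf : Continuous f)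
    (hfi : Integrable fun t => f t / (1 + t ^ 2)) (y : ℝ) :
    Integrable fun t => logStar (I * y) t * f t := by
  have hmeas : AEStronglyMeasurable fun t => logStar (I * y) t := by
    simp_rw [logStar_I_mul]
    exact ((Real.measurable_log.comp (by fun_prop)).div_const 2).aestronglyMeasurable
  have hnear : IntegrableOn (fun t => logStar (I * y) t * f t) (Set.Icc (-1) 1) := by
    have hbound : IntegrableOn (fun t => Real.log (1 + y ^ 2) / 2 - Real.log t) (Set.Icc (-1) 1) :=
      (integrableOn_const measure_Icc_lt_top.ne).sub
        ((intervalIntegrable_iff_integrableOn_Icc_of_le (by norm_num)).1 intervalIntegrable_log')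
    refine IntegrableOn.mul_continuousOn ?_ hf.continuousOn isCompact_Icc
    refine hbound.mono' hmeas.restrict (ae_restrict_of_forall_mem measurableSet_Icc fun t ht => ?_)
    rw [Real.norm_of_nonneg (logStar_I_mul_nonneg y t)]
    exact logStar_I_mul_le_of_abs_le_one y (abs_le.2 ht)
  have hfar : IntegrableOn (fun t => logStar (I * y) t * f t) (Set.Icc (-1) 1)ᶜ := by
    refine (hfi.norm.const_mul (y ^ 2)).integrableOn.mono'
      (hmeas.mul hf.aestronglyMeasurable).restrict
      (ae_restrict_of_forall_mem measurableSet_Icc.compl fun t ht => ?_)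
    have ht : 1 ≤ |t| := by
      by_contra! h
      exact ht (abs_le.1 h.le)
    calc ‖logStar (I * y) t * f t‖ = logStar (I * y) t * ‖f t‖ := by
          rw [norm_mul, Real.norm_of_nonneg (logStar_I_mul_nonneg y t)]
      _ ≤ y ^ 2 / (1 + t ^ 2) * ‖f t‖ :=
          mul_le_mul_of_nonneg_right (logStar_I_mul_le_of_one_le_abs y ht) (norm_nonneg _)
      _ = y ^ 2 * ‖f t / (1 + t ^ 2)‖ := by
          rw [norm_div, Real.norm_of_nonneg (by positivity : (0 : ℝ) ≤ 1 + t ^ 2)]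
          ring
  simpa using hnear.union hfar

theorem pot_I_mul_le_pot_I_mul_add_one {γ : ℝ → ℝ} (hγ : Continuous γ)
    (hγi : Integrable fun t => γ t / (1 + t ^ 2)) (hγ0 : ∀ t, 0 ≤ γ t) {y : ℝ} (hy : 0 ≤ y) :
    pot γ (I * y) ≤ pot γ (I * (y + 1)) := by
  rw [show (y : ℂ) + 1 = ((y + 1 : ℝ) : ℂ) by push_cast; rfl]
  exact integral_mono (integrable_logStar_I_mul_mul hγ hγi y)
    (integrable_logStar_I_mul_mul hγ hγi (y + 1))
    fun t => mul_le_mul_of_nonneg_right (logStar_I_mul_mono hy (by linarith) t) (hγ0 t)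

theorem pot_I_mul_add_one_sub_le {γ : ℝ → ℝ} (hγ : Continuous γ)
    (hγi : Integrable fun t => γ t / (1 + t ^ 2)) (hγ0 : ∀ t, 0 ≤ γ t) {y : ℝ} (hy : 1 ≤ y) :
    pot γ (I * (y + 1)) - pot γ (I * y) ≤ (2 * y + 1) / 2 * ∫ t, γ t / (t ^ 2 + y ^ 2) := by
  have hint (s : ℝ) := integrable_logStar_I_mul_mul hγ hγi s
  rw [show (y : ℂ) + 1 = ((y + 1 : ℝ) : ℂ) by push_cast; rfl, pot, pot,
    ← integral_sub (hint (y + 1)) (hint y), ← MeasureTheory.integral_const_mul]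
  refine integral_mono ((hint (y + 1)).sub (hint y))
    ((integrable_div_sq_add_sq hγi hy).const_mul _) fun t => ?_
  calc logStar (I * ↑(y + 1)) t * γ t - logStar (I * y) t * γ t
      = (logStar (I * ↑(y + 1)) t - logStar (I * y) t) * γ t := by ring
    _ ≤ (2 * y + 1) / 2 / (t ^ 2 + y ^ 2) * γ t :=
        mul_le_mul_of_nonneg_right (logStar_I_mul_add_one_sub_le (by linarith) t) (hγ0 t)
    _ = (2 * y + 1) / 2 * (γ t / (t ^ 2 + y ^ 2)) := by ring

theorem stmt_8_general (γ : ℝ → ℝ) (hγpos : ∀ t, 0 < γ t) (hγcont : Continuous γ)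
    (φ : ℝ → ℝ) (hφ : ∀ x, φ x = ∫ t in (0:ℝ)..x, γ t)
    (N C₁ C₂ : ℝ)
    (hbl : ∀ x₁ x₂ : ℝ, N ≤ x₂ - x₁ →
      C₁ * (x₂ - x₁) ≤ φ x₂ - φ x₁ ∧ φ x₂ - φ x₁ ≤ C₂ * (x₂ - x₁)) :
    Tendsto (fun y : ℝ =>
        (pot γ (Complex.I * ((y : ℂ) + 1)) - pot γ (Complex.I * (y : ℂ))) / y)
      atTop (nhds 0) := by
  have hγ0 : ∀ t, 0 ≤ γ t := fun t => (hγpos t).le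
  have hmass : ∀ x₁ x₂, N ≤ x₂ - x₁ → ∫ t in x₁..x₂, γ t ≤ C₂ * (x₂ - x₁) := fun x₁ x₂ h => by
    rw [← integral_interval_sub_left (hγcont.intervalIntegrable 0 x₂)
      (hγcont.intervalIntegrable 0 x₁), ← hφ, ← hφ]
    exact (hbl x₁ x₂ h).2
  have hγi : Integrable fun t => γ t / (1 + t ^ 2) :=
    integrable_div_one_add_sq_of_intervalIntegral_le hγcont.locallyIntegrable hγ0
      (intervalIntegral_add_one_le_mul_max hγcont.locallyIntegrable hγ0 hmass)
  have hupper : Tendsto (fun y : ℝ => (1 + (2 * y)⁻¹) * ∫ t, γ t / (t ^ 2 + y ^ 2))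
      atTop (nhds 0) := by
    simpa using (tendsto_const_nhds.add (tendsto_inv_atTop_zero.comp
      (tendsto_id.const_mul_atTop two_pos))).mul (tendsto_integral_div_sq_add_sq hγi)
  refine tendsto_of_tendsto_of_tendsto_of_le_of_le' tendsto_const_nhds hupper ?_ ?_ <;>
    filter_upwards [eventually_ge_atTop 1] with y hy
  · exact div_nonneg (sub_nonneg.2 (pot_I_mul_le_pot_I_mul_add_one hγcont hγi hγ0 (by linarith)))
      (by linarith)
  · rw [div_le_iff₀ (by linarith)]
    calc _ ≤ (2 * y + 1) / 2 * ∫ t, γ t / (t ^ 2 + y ^ 2) :=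
          pot_I_mul_add_one_sub_le hγcont hγi hγ0 hy
      _ = _ := by field_simp

theorem stmt_8 (γ : ℝ → ℝ) (hγpos : ∀ t, 0 < γ t) (hγcont : Continuous γ)
    (φ : ℝ → ℝ) (hφ : ∀ x, φ x = ∫ t in (0:ℝ)..x, γ t)
    (N C₁ C₂ : ℝ) (hN : 0 < N) (hC₁ : 0 < C₁) (hC₂ : 0 < C₂)
    (hbl : ∀ x₁ x₂ : ℝ, N ≤ x₂ - x₁ →
      C₁ * (x₂ - x₁) ≤ φ x₂ - φ x₁ ∧ φ x₂ - φ x₁ ≤ C₂ * (x₂ - x₁)) :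
    Tendsto (fun y : ℝ =>
        (pot γ (Complex.I * ((y : ℂ) + 1)) - pot γ (Complex.I * (y : ℂ))) / y)
      atTop (nhds 0) :=
  stmt_8_general γ hγpos hγcont φ hφ N C₁ C₂ hbl
end

section
/- Fix α ∈ [0, 2]. There exists a constant C > 0 such that for every nonzero integer n and every h ∈ [0, 1/2], | θ_n(n + h) − ( α log|n| − log(1 + |n|^α h) ) | ≤ C. -/
/-!
With `a = |n|^α ≥ 1` and `b = a h`, the substitution `s = a t` followed by folding
`[-R, R]` onto `[0, R]`, `R = 5a/4`, gives
`π θ_n(n + h) = ∫₀ᴿ (arctan (b + s) - arctan (b - s)) / s ds`.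
The integrand lies between `0` and `2`, is at most `2 / (1 + (b - s)²)` on `[0, b]`, and beyond
`b + 1` it is `π / s` up to an error `2 / (s - b)²` of bounded integral. Hence the integral is
`π log (R / (b + 1)) + O(1) = π (log a - log (1 + b)) + O(1)` when `b + 1 ≤ R`; otherwise
`a < 4/3` and every term is bounded.
-/

open MeasureTheory intervalIntegral

/-- The summand `θ_n(x)` for `n ≠ 0`. -/
noncomputable def thetaN (α : ℝ) (n : ℤ) (x : ℝ) : ℝ :=
  (1 / Real.pi) * ∫ t in (-(5/4) : ℝ)..(5/4 : ℝ),
    (Real.arctan (|(n : ℝ)| ^ α * (t + x - (n : ℝ))) -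
      Real.arctan (|(n : ℝ)| ^ α * (x - (n : ℝ)))) / t

open Real

theorem lipschitzWith_arctan : LipschitzWith 1 arctan :=
  lipschitzWith_of_nnnorm_deriv_le differentiable_arctan fun x => by
    rw [← NNReal.coe_le_coe, coe_nnnorm, Real.deriv_arctan, NNReal.coe_one, norm_div, norm_one,
      Real.norm_of_nonneg (by positivity)]
    exact div_le_one_of_le₀ (by nlinarith [sq_nonneg x]) (by positivity)

theorem abs_arctan_sub_arctan_le (x y : ℝ) : |arctan x - arctan y| ≤ |x - y| := by
  simpa [Real.dist_eq] using lipschitzWith_arctan.dist_le_mul x y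

theorem arctan_le_self {x : ℝ} (hx : 0 ≤ x) : arctan x ≤ x := by
  simpa [abs_of_nonneg hx] using (le_abs_self _).trans (abs_arctan_sub_arctan_le x 0)

theorem pi_div_two_sub_arctan_le_inv {x : ℝ} (hx : 0 < x) : π / 2 - arctan x ≤ x⁻¹ := by
  rw [← arctan_inv_of_pos hx]
  exact arctan_le_self (inv_nonneg.2 hx.le)

theorem arctan_sub_arctan_le_div {x y : ℝ} (hy : 0 ≤ y) (hxy : y ≤ x) :
    arctan x - arctan y ≤ (x - y) / (1 + y ^ 2) := by
  rw [div_eq_inv_mul]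
  refine (convex_Ici y).image_sub_le_mul_sub_of_deriv_le continuous_arctan.continuousOn
    differentiable_arctan.differentiableOn (fun s hs => ?_) y Set.self_mem_Ici x hxy hxy
  rw [interior_Ici] at hs
  simp only [Real.deriv_arctan, one_div]
  exact inv_anti₀ (by positivity) (by nlinarith [hs.out])

theorem intervalIntegrable_div_self_of_abs_le {g : ℝ → ℝ} {c : ℝ} (hg : Continuous g)
    (hgc : ∀ t, |g t| ≤ c * |t|) (a b : ℝ) :
    IntervalIntegrable (fun t => g t / t) volume a b := by
  have hc : 0 ≤ c := by simpa using (abs_nonneg _).trans (hgc 1)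
  refine (intervalIntegrable_const (c := c)).mono_fun
    (hg.measurable.div measurable_id).aestronglyMeasurable (ae_of_all _ fun t => ?_)
  simp only [Real.norm_eq_abs, abs_div, abs_of_nonneg hc]
  rcases eq_or_ne t 0 with rfl | ht
  · simpa using hc
  · exact (div_le_iff₀ (abs_pos.2 ht)).2 (hgc t)

theorem integral_comp_mul_div_self (g : ℝ → ℝ) {c : ℝ} (hc : c ≠ 0) (x y : ℝ) :
    ∫ t in x..y, g (c * t) / t = ∫ s in c * x..c * y, g s / s := by
  have h : ∀ t, g (c * t) / t = c * (g (c * t) / (c * t)) := fun t => by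
    rcases eq_or_ne t 0 with rfl | ht
    · simp
    · field_simp
  simp_rw [h, intervalIntegral.integral_const_mul, integral_comp_mul_left (fun s => g s / s) hc,
    smul_eq_mul, mul_inv_cancel_left₀ hc]

theorem integral_neg_self_eq_integral_add_comp_neg {f : ℝ → ℝ} {R : ℝ}
    (hf : IntervalIntegrable f volume (-R) R) :
    ∫ x in -R..R, f x = ∫ x in 0..R, (f x + f (-x)) := by
  have h0 : (0 : ℝ) ∈ Set.uIcc (-R) R := by
    rw [Set.mem_uIcc]
    rcases le_total 0 R with h | h <;> [left; right] <;> constructor <;> linarith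
  have hneg : IntervalIntegrable f volume (-R) 0 := hf.mono_set (Set.uIcc_subset_uIcc_left h0)
  have hpos : IntervalIntegrable f volume 0 R := hf.mono_set (Set.uIcc_subset_uIcc_right h0)
  have hneg' : IntervalIntegrable (fun x => f (-x)) volume 0 R := by
    simpa using ((IntervalIntegrable.iff_comp_neg (f := f)).mp hneg).symm
  rw [integral_add hpos hneg', integral_comp_neg, neg_zero,
    ← integral_add_adjacent_intervals hneg hpos, add_comm]

noncomputable def arctanSymmQuot (b s : ℝ) : ℝ := (arctan (b + s) - arctan (b - s)) / s

section arctanSymmQuot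

variable {b s : ℝ}

theorem abs_arctan_add_sub_arctan_sub_le (b s : ℝ) :
    |arctan (b + s) - arctan (b - s)| ≤ 2 * |s| := by
  simpa [show b + s - (b - s) = 2 * s by ring, abs_mul] using
    abs_arctan_sub_arctan_le (b + s) (b - s)

theorem intervalIntegrable_arctanSymmQuot (b x y : ℝ) :
    IntervalIntegrable (arctanSymmQuot b) volume x y :=
  intervalIntegrable_div_self_of_abs_le
    ((continuous_arctan.comp (continuous_const_add b)).sub
      (continuous_arctan.comp (continuous_sub_left b)))
    (abs_arctan_add_sub_arctan_sub_le b) x y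

theorem arctanSymmQuot_nonneg (hs : 0 ≤ s) : 0 ≤ arctanSymmQuot b s :=
  div_nonneg (sub_nonneg.2 (arctan_le_arctan_iff.2 (by linarith))) hs

theorem arctanSymmQuot_le_two (b s : ℝ) : arctanSymmQuot b s ≤ 2 := by
  rcases eq_or_ne s 0 with rfl | hs
  · simp [arctanSymmQuot]
  · refine (le_abs_self _).trans ?_
    rw [arctanSymmQuot, abs_div, div_le_iff₀ (abs_pos.2 hs)]
    exact abs_arctan_add_sub_arctan_sub_le b s

theorem arctanSymmQuot_le_pi_div (hs : 0 < s) : arctanSymmQuot b s ≤ π / s := by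
  refine div_le_div_of_nonneg_right ?_ hs.le
  linarith [arctan_lt_pi_div_two (b + s), neg_pi_div_two_lt_arctan (b - s)]

theorem arctanSymmQuot_le_two_div_of_le (hs : 0 ≤ s) (hsb : s ≤ b) :
    arctanSymmQuot b s ≤ 2 / (1 + (b - s) ^ 2) := by
  rcases hs.eq_or_lt with rfl | hs
  · simp [arctanSymmQuot]; positivity
  · rw [arctanSymmQuot, div_le_iff₀ hs]
    calc arctan (b + s) - arctan (b - s) ≤ (b + s - (b - s)) / (1 + (b - s) ^ 2) :=
          arctan_sub_arctan_le_div (by linarith) (by linarith)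
      _ = 2 / (1 + (b - s) ^ 2) * s := by ring

theorem pi_div_sub_le_arctanSymmQuot (hb : 0 ≤ b) (hs : b < s) :
    π / s - 2 / (s - b) ^ 2 ≤ arctanSymmQuot b s := by
  have hsb : 0 < s - b := sub_pos.2 hs
  have hs0 : 0 < s := by linarith
  have upper : π / 2 - arctan (b + s) ≤ (s - b)⁻¹ :=
    (pi_div_two_sub_arctan_le_inv (by linarith)).trans (inv_anti₀ hsb (by linarith))
  have lower : π / 2 + arctan (b - s) ≤ (s - b)⁻¹ := by
    rw [← neg_sub s b, arctan_neg]
    linarith [pi_div_two_sub_arctan_le_inv hsb]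
  calc π / s - 2 / (s - b) ^ 2 ≤ π / s - 2 / ((s - b) * s) := by
        gcongr
        nlinarith
    _ = (π - 2 * (s - b)⁻¹) / s := by field_simp
    _ ≤ arctanSymmQuot b s := div_le_div_of_nonneg_right (by linarith) hs0.le

theorem integral_arctanSymmQuot_nonneg {x y : ℝ} (hx : 0 ≤ x) (hxy : x ≤ y) :
    0 ≤ ∫ s in x..y, arctanSymmQuot b s :=
  integral_nonneg hxy fun _ hs => arctanSymmQuot_nonneg (hx.trans hs.1)

theorem integral_arctanSymmQuot_le_two_mul {x y : ℝ} (hxy : x ≤ y) :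
    ∫ s in x..y, arctanSymmQuot b s ≤ 2 * (y - x) := by
  simpa [mul_comm] using integral_mono_on hxy (intervalIntegrable_arctanSymmQuot b x y)
    intervalIntegrable_const fun s _ => arctanSymmQuot_le_two b s

theorem integral_arctanSymmQuot_zero_le_pi (hb : 0 ≤ b) :
    ∫ s in 0..b, arctanSymmQuot b s ≤ π := by
  have hcont : Continuous fun s => 2 / (1 + (b - s) ^ 2) :=
    continuous_const.div (by fun_prop) fun s => by positivity
  calc ∫ s in 0..b, arctanSymmQuot b s ≤ ∫ s in 0..b, 2 / (1 + (b - s) ^ 2) :=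
        integral_mono_on hb (intervalIntegrable_arctanSymmQuot b 0 b)
          (hcont.intervalIntegrable 0 b) fun s hs => arctanSymmQuot_le_two_div_of_le hs.1 hs.2
    _ = 2 * arctan b := by
        have h := integral_comp_sub_left (fun u : ℝ => 2 / (1 + u ^ 2)) b (a := 0) (b := b)
        simp only [sub_self, sub_zero] at h
        simp_rw [h, div_eq_mul_one_div (2 : ℝ), intervalIntegral.integral_const_mul,
          integral_one_div_one_add_sq, arctan_zero, sub_zero]
    _ ≤ π := by linarith [arctan_lt_pi_div_two b]

theorem integral_arctanSymmQuot_le_log {x y : ℝ} (hx : 0 < x) (hxy : x ≤ y) :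
    ∫ s in x..y, arctanSymmQuot b s ≤ π * log (y / x) := by
  have hpos : ∀ s ∈ Set.uIcc x y, 0 < s := fun s hs => by
    rw [Set.uIcc_of_le hxy] at hs; exact hx.trans_le hs.1
  calc ∫ s in x..y, arctanSymmQuot b s ≤ ∫ s in x..y, π * (1 / s) :=
        integral_mono_on hxy (intervalIntegrable_arctanSymmQuot b x y)
          ((continuousOn_const.mul (continuousOn_const.div continuousOn_id
            fun s hs => (hpos s hs).ne')).intervalIntegrable)
          fun s hs => by
            rw [mul_one_div]
            exact arctanSymmQuot_le_pi_div (hx.trans_le hs.1)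
    _ = π * log (y / x) := by
        rw [intervalIntegral.integral_const_mul, integral_one_div fun h0 => (hpos 0 h0).false]

theorem log_sub_le_integral_arctanSymmQuot (hb : 0 ≤ b) {R : ℝ} (hR : b + 1 ≤ R) :
    π * log (R / (b + 1)) - 2 ≤ ∫ s in b + 1..R, arctanSymmQuot b s := by
  have hgap : ∀ s ∈ Set.uIcc (b + 1) R, 1 ≤ s - b := fun s hs => by
    rw [Set.uIcc_of_le hR] at hs; linarith [hs.1]
  have hinv : ContinuousOn (fun s => π * (1 / s)) (Set.uIcc (b + 1) R) :=
    continuousOn_const.mul (continuousOn_const.div continuousOn_id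
      fun s hs => by linarith [hgap s hs])
  have hsq : ContinuousOn (fun s => 2 / (s - b) ^ 2) (Set.uIcc (b + 1) R) :=
    continuousOn_const.div (by fun_prop) fun s hs => by nlinarith [hgap s hs]
  have hsq_int : ∫ s in b + 1..R, 2 / (s - b) ^ 2 ≤ 2 := by
    have hderiv : ∀ s ∈ Set.uIcc (b + 1) R,
        HasDerivAt (fun u => -2 * (u - b)⁻¹) (2 / (s - b) ^ 2) s := fun s hs => by
      have hsb : s - b ≠ 0 := (by linarith [hgap s hs] : (0 : ℝ) < s - b).ne'
      exact ((((hasDerivAt_id' s).sub_const b).inv hsb).const_mul (-2)).congr_deriv (by ring)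
    rw [integral_eq_sub_of_hasDerivAt hderiv hsq.intervalIntegrable]
    have : 0 ≤ (R - b)⁻¹ := inv_nonneg.2 (by linarith)
    simp only [add_sub_cancel_left, inv_one]
    linarith
  calc π * log (R / (b + 1)) - 2
      ≤ (∫ s in b + 1..R, π * (1 / s)) - ∫ s in b + 1..R, 2 / (s - b) ^ 2 := by
        rw [intervalIntegral.integral_const_mul,
          integral_one_div fun h0 => by linarith [hgap 0 h0]]
        linarith
    _ = ∫ s in b + 1..R, (π * (1 / s) - 2 / (s - b) ^ 2) :=
        (integral_sub hinv.intervalIntegrable hsq.intervalIntegrable).symm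
    _ ≤ ∫ s in b + 1..R, arctanSymmQuot b s :=
        integral_mono_on hR (hinv.sub hsq).intervalIntegrable
          (intervalIntegrable_arctanSymmQuot b _ _) fun s hs => by
            rw [mul_one_div]
            exact pi_div_sub_le_arctanSymmQuot hb (by linarith [hs.1])

theorem abs_integral_arctanSymmQuot_sub_log_le (hb : 0 ≤ b) {R : ℝ} (hR : b + 1 ≤ R) :
    |(∫ s in 0..R, arctanSymmQuot b s) - π * log (R / (b + 1))| ≤ π + 2 := by
  have hi := intervalIntegrable_arctanSymmQuot b
  have hsplit : ∫ s in 0..R, arctanSymmQuot b s = (∫ s in 0..b, arctanSymmQuot b s) +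
      (∫ s in b..b + 1, arctanSymmQuot b s) + ∫ s in b + 1..R, arctanSymmQuot b s := by
    rw [integral_add_adjacent_intervals (hi _ _) (hi _ _),
      integral_add_adjacent_intervals (hi _ _) (hi _ _)]
  have h₁ := integral_arctanSymmQuot_zero_le_pi hb
  have h₁' := integral_arctanSymmQuot_nonneg (b := b) le_rfl hb
  have h₂ := integral_arctanSymmQuot_le_two_mul (b := b) (by linarith : b ≤ b + 1)
  have h₂' := integral_arctanSymmQuot_nonneg (b := b) hb (by linarith : b ≤ b + 1)
  have h₃ := integral_arctanSymmQuot_le_log (b := b) (by linarith) hR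
  have h₃' := log_sub_le_integral_arctanSymmQuot hb hR
  rw [abs_le]
  constructor <;> linarith

end arctanSymmQuot

theorem integral_arctan_div_eq_integral_arctanSymmQuot {a : ℝ} (ha : a ≠ 0) (h T : ℝ) :
    ∫ t in -T..T, (arctan (a * (t + h)) - arctan (a * h)) / t =
      ∫ s in 0..a * T, arctanSymmQuot (a * h) s := by
  set g : ℝ → ℝ := fun u => arctan (u + a * h) - arctan (a * h)
  have hg : IntervalIntegrable (fun s => g s / s) volume (-(a * T)) (a * T) :=
    intervalIntegrable_div_self_of_abs_le (c := 1)
      ((continuous_arctan.comp (continuous_add_const _)).sub continuous_const)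
      (fun s => by simpa [g] using abs_arctan_sub_arctan_le (s + a * h) (a * h)) _ _
  calc ∫ t in -T..T, (arctan (a * (t + h)) - arctan (a * h)) / t
      = ∫ t in -T..T, g (a * t) / t := by simp only [g, mul_add]
    _ = ∫ s in -(a * T)..a * T, g s / s := by
        rw [integral_comp_mul_div_self g ha, mul_neg]
    _ = ∫ s in 0..a * T, (g s / s + g (-s) / -s) := integral_neg_self_eq_integral_add_comp_neg hg
    _ = ∫ s in 0..a * T, arctanSymmQuot (a * h) s := by
        refine integral_congr fun s _ => ?_
        simp only [g, arctanSymmQuot, div_neg, ← sub_eq_add_neg, ← sub_div]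
        ring_nf

theorem thetaN_intCast_add (α : ℝ) {n : ℤ} (hn : n ≠ 0) (h : ℝ) :
    thetaN α n (n + h) =
      1 / π * ∫ s in 0..|(n : ℝ)| ^ α * (5 / 4), arctanSymmQuot (|(n : ℝ)| ^ α * h) s := by
  have ha : |(n : ℝ)| ^ α ≠ 0 := (rpow_pos_of_pos (abs_pos.2 (Int.cast_ne_zero.2 hn)) α).ne'
  rw [thetaN, ← integral_arctan_div_eq_integral_arctanSymmQuot ha h (5 / 4)]
  simp only [add_sub_cancel_left, add_sub_assoc]

theorem abs_inv_pi_mul_integral_arctanSymmQuot_sub_log_le {a h : ℝ} (ha : 1 ≤ a)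
    (hh₀ : 0 ≤ h) (hh : h ≤ 1 / 2) :
    |1 / π * (∫ s in 0..a * (5 / 4), arctanSymmQuot (a * h) s) - (log a - log (1 + a * h))|
      ≤ 3 := by
  set I := ∫ s in 0..a * (5 / 4), arctanSymmQuot (a * h) s
  have hb : 0 ≤ a * h := by positivity
  have hlog_a : 0 ≤ log a := log_nonneg ha
  have hlog_b : 0 ≤ log (1 + a * h) := log_nonneg (by linarith)
  have hpi : 3 < π := pi_gt_three
  rcases le_or_gt (a * h + 1) (a * (5 / 4)) with hR | hR
  · have key := abs_integral_arctanSymmQuot_sub_log_le hb hR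
    have hlog : log (a * (5 / 4) / (a * h + 1)) = log (5 / 4) + (log a - log (1 + a * h)) := by
      rw [log_div (by positivity) (by positivity), log_mul (by positivity) (by norm_num),
        add_comm (a * h)]
      ring
    have hlog54 : log (5 / 4) ≤ 1 / 4 := by
      linarith [log_le_sub_one_of_pos (by norm_num : (0 : ℝ) < 5 / 4)]
    have hlog54' : 0 ≤ log (5 / 4) := log_nonneg (by norm_num)
    have hdiv : |1 / π * I - log (a * (5 / 4) / (a * h + 1))| ≤ 1 + 2 / π := by
      rw [show 1 / π * I - log (a * (5 / 4) / (a * h + 1)) =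
          (I - π * log (a * (5 / 4) / (a * h + 1))) / π by field_simp,
        abs_div, abs_of_pos pi_pos, div_le_iff₀ pi_pos,
        show (1 + 2 / π) * π = π + 2 by field_simp]
      exact key
    have h2pi : 2 / π ≤ 1 := by rw [div_le_one pi_pos]; linarith
    rw [hlog] at hdiv
    rw [abs_le] at hdiv ⊢
    constructor <;> linarith [hdiv.1, hdiv.2]
  · have ha' : a < 4 / 3 := by nlinarith
    have hI₀ : 0 ≤ I := integral_arctanSymmQuot_nonneg le_rfl (by positivity)
    have hI : I ≤ 2 * (a * (5 / 4) - 0) := integral_arctanSymmQuot_le_two_mul (by positivity)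
    have hIpi : 1 / π * I ≤ 10 / 9 := by
      rw [one_div_mul_eq_div, div_le_iff₀ pi_pos]; nlinarith
    have hIpi₀ : 0 ≤ 1 / π * I := by positivity
    have hlog_a' : log a ≤ 1 / 3 := by linarith [log_le_sub_one_of_pos (by linarith : 0 < a)]
    have hlog_b' : log (1 + a * h) ≤ 2 / 3 := by
      linarith [log_le_sub_one_of_pos (by linarith : 0 < 1 + a * h),
        mul_le_mul ha'.le hh hh₀ (by norm_num : (0 : ℝ) ≤ 4 / 3)]
    rw [abs_le]
    constructor <;> linarith

theorem stmt_17 (α : ℝ) (hα : α ∈ Set.Icc (0:ℝ) 2) :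
    ∃ C > (0:ℝ), ∀ n : ℤ, n ≠ 0 → ∀ h : ℝ, h ∈ Set.Icc (0:ℝ) (1/2) →
      |thetaN α n ((n : ℝ) + h) -
        (α * Real.log |(n : ℝ)| - Real.log (1 + |(n : ℝ)| ^ α * h))| ≤ C := by
  refine ⟨3, by norm_num, fun n hn h ⟨hh₀, hh⟩ => ?_⟩
  have hn₁ : (1 : ℝ) ≤ |(n : ℝ)| := by exact_mod_cast Int.one_le_abs hn
  rw [thetaN_intCast_add α hn, ← log_rpow (by linarith) α]
  exact abs_inv_pi_mul_integral_arctanSymmQuot_sub_log_le (one_le_rpow hn₁ hα.1) hh₀ hh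
end
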